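/- arXiv:1810.02346 — 2 statements merged into one kernel-verified Lean document; each statement's English description precedes it below -/
import Mathlib

section
/- Let n ≥ 1 and d ≥ 2. The spatial Laplacian Δ' maps the space of homogeneous polynomials of degree d in ℝ[x_0,…,x_n] surjectively onto the space of homogeneous polynomials of degree d−2. -/
open MvPolynomial Finsupp

noncomputable def spatialLaplacian (n : ℕ) :
    MvPolynomial (Fin (n + 1)) ℝ →ₗ[ℝ] MvPolynomial (Fin (n + 1)) ℝ :=
  ∑ i : Fin n, ((pderiv i.succ).toLinearMap ∘ₗ (pderiv i.succ).toLinearMap)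

lemma lap_monomial (n : ℕ) (β : Fin (n+1) →₀ ℕ) (c : ℝ) :
    spatialLaplacian n (monomial β c) =
      ∑ i : Fin n, monomial (β - single i.succ 2)
        (c * (β i.succ) * ((β i.succ : ℕ) - 1 : ℕ)) := by
  rw [spatialLaplacian, LinearMap.sum_apply]
  refine Finset.sum_congr rfl fun i _ => ?_
  simp only [LinearMap.comp_apply, Derivation.coeFn_coe, pderiv_monomial]
  rw [tsub_tsub, ← Finsupp.single_add, Finsupp.tsub_apply, Finsupp.single_eq_same]

def S (n : ℕ) (α : Fin (n+1) →₀ ℕ) : ℕ :=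
  ∑ i : Fin (n+1), if 2 ≤ (i : ℕ) then α i else 0

lemma S_add (n : ℕ) (a b : Fin (n+1) →₀ ℕ) : S n (a + b) = S n a + S n b := by
  simp only [S, Finsupp.add_apply]
  rw [← Finset.sum_add_distrib]
  exact Finset.sum_congr rfl fun i _ => by split <;> simp

lemma S_single (n : ℕ) (j : Fin (n+1)) (k : ℕ) :
    S n (single j k) = if 2 ≤ (j : ℕ) then k else 0 := by
  rw [S, Finset.sum_eq_single j]
  · simp
  · intro i _ hij
    simp [Finsupp.single_apply, Ne.symm hij]
  · simp

lemma deg_add {σ : Type*} (a b : σ →₀ ℕ) :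
    (a + b).degree = a.degree + b.degree := by
  simp [Finsupp.degree_eq_weight_one, map_add]

lemma deg_single {σ : Type*} (j : σ) (k : ℕ) : (single j k).degree = k := by
  classical
  simp [Finsupp.degree_eq_weight_one, Finsupp.weight_apply, Finsupp.sum_single_index]

lemma mono_key (n e : ℕ) (hn : 1 ≤ n) :
    ∀ k : ℕ, ∀ (α : Fin (n+1) →₀ ℕ) (c : ℝ), α.degree = e → S n α ≤ k →
    ∃ p : MvPolynomial (Fin (n+1)) ℝ,
      p.IsHomogeneous (e+2) ∧ spatialLaplacian n p = monomial α c := by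
  intro k
  induction k using Nat.strong_induction_on with
  | _ k IH =>
  intro α c hdeg hs
  set i₀ : Fin n := ⟨0, hn⟩ with hi₀
  set i₁ : Fin (n+1) := i₀.succ with hi₁
  set a : ℕ := α i₁ with ha
  set c' : ℝ := c / ((a+1)*(a+2)) with hc'
  set β : Fin (n+1) →₀ ℕ := α + single i₁ 2 with hβ
  have hβi₁ : β i₁ = a + 2 := by simp [hβ, ha]
  have hβdeg : β.degree = e + 2 := by rw [hβ, deg_add, deg_single, hdeg]
  -- the terms of the Laplacian of monomial β c'
  set t : Fin n → MvPolynomial (Fin (n+1)) ℝ := fun i =>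
    monomial (β - single i.succ 2) (c' * (β i.succ) * ((β i.succ : ℕ) - 1 : ℕ)) with ht
  have hlap : spatialLaplacian n (monomial β c') = ∑ i : Fin n, t i := lap_monomial n β c'
  have ht0 : t i₀ = monomial α c := by
    rw [ht]
    have hsub : β - single i₁ 2 = α := by
      ext j; rw [Finsupp.tsub_apply, hβ, Finsupp.add_apply]; omega
    simp only [← hi₁, hsub, hβi₁]
    congr 1
    rw [hc']
    have : ((a : ℝ)+1)*((a:ℝ)+2) ≠ 0 := by positivity
    push_cast [Nat.add_sub_cancel]
    field_simp
  -- preimages for the other terms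
  have hrest : ∀ i : Fin n, i ≠ i₀ → ∃ p : MvPolynomial (Fin (n+1)) ℝ,
      p.IsHomogeneous (e+2) ∧ spatialLaplacian n p = t i := by
    intro i hi
    have hne : i.succ ≠ i₁ := fun h => hi (Fin.succ_injective _ h)
    have hβi : β i.succ = α i.succ := by
      rw [hβ, Finsupp.add_apply, Finsupp.single_apply, if_neg (fun h => hne h.symm), add_zero]
    by_cases hle : α i.succ ≤ 1
    · refine ⟨0, isHomogeneous_zero _ _ _, ?_⟩
      rw [map_zero, ht]
      interval_cases h : α i.succ <;> simp [hβi, h]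
    · push_neg at hle
      have hv2 : 2 ≤ (i.succ : ℕ) := by
        have : (i : ℕ) ≠ 0 := fun h => hi (Fin.ext h)
        simp [Fin.val_succ]; omega
      have hsle : single i.succ 2 ≤ β := by
        intro j
        rcases eq_or_ne j i.succ with rfl | hj
        · simpa [Finsupp.single_apply, hβi] using (show 2 ≤ α i.succ by omega)
        · simp [Finsupp.single_apply, Ne.symm hj]
      set γ : Fin (n+1) →₀ ℕ := β - single i.succ 2 with hγ
      have hγβ : γ + single i.succ 2 = β := tsub_add_cancel_of_le hsle
      have hγdeg : γ.degree = e := by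
        have := deg_add γ (single i.succ 2)
        rw [hγβ, hβdeg, deg_single] at this
        omega
      have hSβ : S n β = S n α := by
        rw [hβ, S_add, S_single]
        simp [hi₁, hi₀, Fin.val_succ]
      have hSγ : S n γ + 2 = S n α := by
        have := S_add n γ (single i.succ 2)
        rw [hγβ, hSβ, S_single, if_pos hv2] at this
        omega
      have hk2 : 2 ≤ k := by
        have : 2 ≤ S n α := by omega
        omega
      obtain ⟨p, hp1, hp2⟩ := IH (k-1) (by omega) γ
        (c' * (β i.succ) * ((β i.succ : ℕ) - 1 : ℕ)) hγdeg (by omega)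
      exact ⟨p, hp1, by rw [hp2, ht]⟩
  classical
  choose! P hP1 hP2 using hrest
  refine ⟨monomial β c' - ∑ i ∈ Finset.univ.erase i₀, P i, ?_, ?_⟩
  · refine (isHomogeneous_monomial c' hβdeg).sub ?_
    exact MvPolynomial.IsHomogeneous.sum _ _ _ fun i hi =>
      hP1 i (Finset.ne_of_mem_erase hi)
  · rw [map_sub, hlap, map_sum]
    have : ∑ i ∈ Finset.univ.erase i₀, spatialLaplacian n (P i)
        = ∑ i ∈ Finset.univ.erase i₀, t i :=
      Finset.sum_congr rfl fun i hi => hP2 i (Finset.ne_of_mem_erase hi)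
    rw [this, ← Finset.add_sum_erase _ t (Finset.mem_univ i₀), ht0]
    ring

/-- for `n ≥ 1` and `d ≥ 2`, the spatial Laplacian maps the
homogeneous polynomials of degree `d` in `ℝ[x_0,…,x_n]` surjectively onto the
homogeneous polynomials of degree `d - 2`. -/
theorem stmt2 (n d : ℕ) (hn : 1 ≤ n) (hd : 2 ≤ d)
    (q : MvPolynomial (Fin (n + 1)) ℝ) (hq : q.IsHomogeneous (d - 2)) :
    ∃ p : MvPolynomial (Fin (n + 1)) ℝ,
      p.IsHomogeneous d ∧ spatialLaplacian n p = q := by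
  have hmono : ∀ α ∈ q.support, ∃ p : MvPolynomial (Fin (n+1)) ℝ,
      p.IsHomogeneous (d - 2 + 2) ∧ spatialLaplacian n p = monomial α (q.coeff α) := by
    intro α hα
    have hdeg : α.degree = d - 2 := by
      rw [Finsupp.degree_eq_weight_one]
      exact hq (MvPolynomial.mem_support_iff.mp hα)
    exact mono_key n (d-2) hn (S n α) α (q.coeff α) hdeg le_rfl
  classical
  choose! P hP1 hP2 using hmono
  refine ⟨∑ α ∈ q.support, P α, ?_, ?_⟩
  · have h2 : d - 2 + 2 = d := by omega
    rw [← h2]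
    exact MvPolynomial.IsHomogeneous.sum _ _ _ hP1
  · rw [map_sum]
    rw [Finset.sum_congr rfl hP2]
    exact q.support_sum_monomial_coeff
end

section
/- T is the internal direct sum of 𝔟₂ and Sym⁴₀ℝⁿ: every V ∈ T can be written uniquely as V = B + S with B ∈ T satisfying P(B) = 0 and S ∈ T totally symmetric (i.e., Sym²₀(Sym²₀ℝⁿ) = 𝔟₂ ⊕ Sym⁴₀ℝⁿ). -/
open scoped BigOperators

/-- Four-index tensors on `ℝⁿ`. -/
abbrev Ten4 (n : ℕ) : Type := Fin n → Fin n → Fin n → Fin n → ℝ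

/-- Membership in `T = Sym²₀(Sym²₀ℝⁿ)`: the symmetries
`V_{ijkl} = V_{jikl} = V_{ijlk} = V_{klij}` together with the trace conditions
`∑_i V_{iikl} = 0` and `∑_i V_{ijil} = 0`. -/
def MemT (n : ℕ) (V : Ten4 n) : Prop :=
  (∀ i j k l, V i j k l = V j i k l) ∧
  (∀ i j k l, V i j k l = V i j l k) ∧
  (∀ i j k l, V i j k l = V k l i j) ∧
  (∀ k l, ∑ i, V i i k l = 0) ∧
  (∀ j l, ∑ i, V i j i l = 0)

/-- Symmetrization `P` over the last three indices:
`(PV)_{ijkl} = (1/6) ∑_{σ ∈ S₃} V_{i σ(j) σ(k) σ(l)}`. -/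
noncomputable def symLast3 {n : ℕ} (V : Ten4 n) : Ten4 n :=
  fun i j k l =>
    (1 / 6 : ℝ) * ∑ σ : Equiv.Perm (Fin 3),
      V i (![j, k, l] (σ 0)) (![j, k, l] (σ 1)) (![j, k, l] (σ 2))

/-- Full symmetrization over all four indices:
`(1/24) ∑_{σ ∈ S₄} V_{σ(i) σ(j) σ(k) σ(l)}`. -/
noncomputable def symAll {n : ℕ} (V : Ten4 n) : Ten4 n :=
  fun i j k l =>
    (1 / 24 : ℝ) * ∑ σ : Equiv.Perm (Fin 4),
      V (![i, j, k, l] (σ 0)) (![i, j, k, l] (σ 1))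
        (![i, j, k, l] (σ 2)) (![i, j, k, l] (σ 3))

/-- Total symmetry of a four-index tensor. -/
def IsTotallySym (n : ℕ) (V : Ten4 n) : Prop :=
  ∀ i j k l, V i j k l = V j i k l ∧ V i j k l = V i k j l ∧
    V i j k l = V i j l k

namespace Stmt9Aux

def g6 : Fin 6 → Equiv.Perm (Fin 3) :=
  ![1, Equiv.swap 0 1, Equiv.swap 0 2, Equiv.swap 1 2,
    Equiv.swap 0 1 * Equiv.swap 1 2, Equiv.swap 1 2 * Equiv.swap 0 1]

lemma g6_bij : Function.Bijective g6 := by decide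

lemma sum_perm3 (f : Equiv.Perm (Fin 3) → ℝ) :
    ∑ σ : Equiv.Perm (Fin 3), f σ =
      f 1 + f (Equiv.swap 0 1) + f (Equiv.swap 0 2) + f (Equiv.swap 1 2) +
      f (Equiv.swap 0 1 * Equiv.swap 1 2) + f (Equiv.swap 1 2 * Equiv.swap 0 1) := by
  rw [← Fintype.sum_bijective g6 g6_bij (fun i => f (g6 i)) f (fun _ => rfl)]
  have h : ∀ i : Fin 6, g6 i = ![1, Equiv.swap 0 1, Equiv.swap 0 2, Equiv.swap 1 2,
      Equiv.swap 0 1 * Equiv.swap 1 2, Equiv.swap 1 2 * Equiv.swap 0 1] i := fun _ => rfl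
  simp only [Fin.sum_univ_six, h]
  norm_num [Matrix.cons_val_succ]
  rfl

lemma symLast3_apply {n : ℕ} (V : Ten4 n) (i j k l : Fin n) :
    symLast3 V i j k l = (1/6 : ℝ) *
      (V i j k l + V i k j l + V i l k j + V i j l k + V i k l j + V i l j k) := by
  rw [symLast3, sum_perm3]
  simp +decide [Equiv.swap_apply_def, Matrix.cons_val_succ]

lemma symLast3_of_totallySym {n : ℕ} {S : Ten4 n} (hs : IsTotallySym n S) :
    symLast3 S = S := by
  funext i j k l
  have h23 : ∀ a b c d, S a b c d = S a c b d := fun a b c d => (hs a b c d).2.1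
  have h34 : ∀ a b c d, S a b c d = S a b d c := fun a b c d => (hs a b c d).2.2
  rw [symLast3_apply]
  have e1 : S i k j l = S i j k l := (h23 i j k l).symm
  have e2 : S i l k j = S i j k l := by
    calc S i l k j = S i k l j := h23 i l k j
      _ = S i k j l := (h34 i k j l).symm
      _ = S i j k l := (h23 i j k l).symm
  have e3 : S i j l k = S i j k l := (h34 i j k l).symm
  have e4 : S i k l j = S i j k l := by
    calc S i k l j = S i k j l := (h34 i k j l).symm
      _ = S i j k l := (h23 i j k l).symm
  have e5 : S i l j k = S i j k l := by
    calc S i l j k = S i j l k := h23 i l j k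
      _ = S i j k l := e3
  rw [e1, e2, e3, e4, e5]; ring

lemma totallySym_pairSwap {n : ℕ} {S : Ten4 n} (hs : IsTotallySym n S)
    (i j k l : Fin n) : S i j k l = S k l i j := by
  have h12 : ∀ a b c d, S a b c d = S b a c d := fun a b c d => (hs a b c d).1
  have h23 : ∀ a b c d, S a b c d = S a c b d := fun a b c d => (hs a b c d).2.1
  have h34 : ∀ a b c d, S a b c d = S a b d c := fun a b c d => (hs a b c d).2.2
  calc S i j k l = S i k j l := h23 i j k l
    _ = S k i j l := h12 i k j l
    _ = S k i l j := h34 k i j l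
    _ = S k l i j := h23 k i l j

lemma totallySym_symLast3 {n : ℕ} {V : Ten4 n} (hV : MemT n V) :
    IsTotallySym n (symLast3 V) := by
  obtain ⟨h1, h2, h3, _, _⟩ := hV
  intro i j k l
  refine ⟨?_, ?_, ?_⟩
  · rw [symLast3_apply, symLast3_apply]
    have a1 : V j i k l = V i j k l := (h1 i j k l).symm
    have a2 : V j k i l = V i l j k := h3 j k i l
    have a3 : V j l k i = V i k j l := by
      calc V j l k i = V k i j l := h3 j l k i
        _ = V i k j l := (h1 i k j l).symm
    have a4 : V j i l k = V i j l k := (h1 i j l k).symm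
    have a5 : V j k l i = V i l j k := by
      calc V j k l i = V l i j k := h3 j k l i
        _ = V i l j k := (h1 i l j k).symm
    have a6 : V j l i k = V i k j l := h3 j l i k
    have b1 : V i l k j = V i l j k := (h2 i l j k).symm
    have b2 : V i j l k = V i j k l := (h2 i j k l).symm
    have b3 : V i k l j = V i k j l := (h2 i k j l).symm
    linarith
  · rw [symLast3_apply, symLast3_apply]; ring
  · rw [symLast3_apply, symLast3_apply]; ring

lemma memT_symLast3 {n : ℕ} {V : Ten4 n} (hV : MemT n V) :
    MemT n (symLast3 V) := by
  have hts := totallySym_symLast3 hV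
  obtain ⟨h1, h2, h3, t1, t2⟩ := hV
  refine ⟨fun i j k l => (hts i j k l).1, fun i j k l => (hts i j k l).2.2,
    fun i j k l => totallySym_pairSwap hts i j k l, ?_, ?_⟩
  · intro k l
    have key : ∀ i, symLast3 V i i k l =
        (1/3 : ℝ) * (V i i k l + V i k i l + V i l i k) := by
      intro i
      rw [symLast3_apply]
      have b1 : V i l k i = V i l i k := (h2 i l i k).symm
      have b2 : V i i l k = V i i k l := (h2 i i k l).symm
      have b3 : V i k l i = V i k i l := (h2 i k i l).symm
      linarith
    rw [Finset.sum_congr rfl fun i _ => key i, ← Finset.mul_sum,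
      Finset.sum_add_distrib, Finset.sum_add_distrib, t1 k l, t2 k l, t2 l k]
    ring
  · intro j l
    have key : ∀ i, symLast3 V i j i l =
        (1/3 : ℝ) * (V i j i l + V i i j l + V i l i j) := by
      intro i
      rw [symLast3_apply]
      have b1 : V i j l i = V i j i l := (h2 i j i l).symm
      have b2 : V i i l j = V i i j l := (h2 i i j l).symm
      have b3 : V i l j i = V i l i j := (h2 i l i j).symm
      linarith
    rw [Finset.sum_congr rfl fun i _ => key i, ← Finset.mul_sum,
      Finset.sum_add_distrib, Finset.sum_add_distrib, t2 j l, t1 j l, t2 l j]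
    ring

lemma symLast3_sub {n : ℕ} (V W : Ten4 n) :
    symLast3 (V - W) = symLast3 V - symLast3 W := by
  funext i j k l
  simp only [Pi.sub_apply, symLast3_apply]
  ring

lemma symLast3_add {n : ℕ} (V W : Ten4 n) :
    symLast3 (V + W) = symLast3 V + symLast3 W := by
  funext i j k l
  simp only [Pi.add_apply, symLast3_apply]
  ring

lemma memT_sub {n : ℕ} {V W : Ten4 n} (hV : MemT n V) (hW : MemT n W) :
    MemT n (V - W) := by
  obtain ⟨h1, h2, h3, t1, t2⟩ := hV
  obtain ⟨g1, g2, g3, s1, s2⟩ := hW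
  refine ⟨?_, ?_, ?_, ?_, ?_⟩ <;> intros <;>
    simp only [Pi.sub_apply, Finset.sum_sub_distrib]
  · rw [h1, g1]
  · rw [h2, g2]
  · rw [h3, g3]
  · rw [t1, s1]; ring
  · rw [t2, s2]; ring

end Stmt9Aux

open Stmt9Aux

/-- `T` is the internal direct sum of `𝔟₂ = ker P` and
`Sym⁴₀ℝⁿ`: every `V ∈ T` is uniquely `V = B + S` with `B ∈ T`, `P(B) = 0`,
and `S ∈ T` totally symmetric. -/
theorem stmt9 (n : ℕ) (hn : 1 ≤ n) (V : Ten4 n) (hV : MemT n V) :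
    ∃! BS : Ten4 n × Ten4 n,
      (MemT n BS.1 ∧ symLast3 BS.1 = 0) ∧
      (MemT n BS.2 ∧ IsTotallySym n BS.2) ∧
      V = BS.1 + BS.2 := by
  set S := symLast3 V with hS
  have hts : IsTotallySym n S := totallySym_symLast3 hV
  have hSMem : MemT n S := memT_symLast3 hV
  refine ⟨(V - S, S), ⟨⟨memT_sub hV hSMem, ?_⟩, ⟨hSMem, hts⟩, ?_⟩, ?_⟩
  · rw [symLast3_sub, ← hS, symLast3_of_totallySym hts, sub_self]
  · funext i j k l
    simp only [Pi.add_apply, Pi.sub_apply]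
    ring
  · rintro ⟨B', S'⟩ ⟨⟨hB'T, hB'P⟩, ⟨hS'T, hS'sym⟩, hsum⟩
    have hsl : S = S' := by
      rw [hS, hsum, symLast3_add, hB'P, symLast3_of_totallySym hS'sym, zero_add]
    have hB' : B' = V - S := by
      funext i j k l
      have := congrFun (congrFun (congrFun (congrFun hsum i) j) k) l
      simp only [Pi.add_apply] at this
      simp only [Pi.sub_apply, hsl]
      linarith
    simp only [Prod.mk.injEq]
    exact ⟨hB', hsl.symm⟩
end
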